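/- Let p be a positive natural number, let μ ∈ ℝ^p, and let Σ be a real symmetric positive definite p×p matrix. If X is an ℝ^p-valued random vector distributed according to the multivariate Gaussian distribution N(μ, Σ), then the Mahalanobis distance statistic d = (X − μ)ᵀ Σ⁻¹ (X − μ) is chi-squared distributed with p degrees of freedom; that is, the law of d is the Gamma distribution with shape parameter p/2 and rate parameter 1/2. -/

import Mathlib

/-!
Factor `Σ = T Tᵀ` and substitute `x = μ + T y`: the Mahalanobis form becomes `‖y‖²` and the
Jacobian `|det T| = √(det Σ)` cancels the factor `(det Σ)^{-1/2}` of the density. In polar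
coordinates followed by `t = r²`, the map `y ↦ ‖y‖²` pushes Lebesgue measure on `ℝ^p` forward to
`π^{p/2} / Γ(p/2) · t^{p/2-1} dt` on `(0, ∞)`, and against `(2π)^{-p/2} e^{-t/2}` this is the
Gamma density with shape `p/2` and rate `1/2`.
-/

open MeasureTheory ProbabilityTheory Matrix

noncomputable def mvGaussian {p : ℕ} (μ : Fin p → ℝ) (S : Matrix (Fin p) (Fin p) ℝ) :
    Measure (Fin p → ℝ) :=
  volume.withDensity fun x =>
    ENNReal.ofReal ((2 * Real.pi) ^ (-(p : ℝ) / 2) * S.det ^ (-(1 : ℝ) / 2) *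
      Real.exp (-(1 / 2) * ((x - μ) ⬝ᵥ S⁻¹.mulVec (x - μ))))

open Set Metric Real Module
open scoped ENNReal MatrixOrder

theorem lintegral_fun_norm_addHaar {E : Type*} [NormedAddCommGroup E] [NormedSpace ℝ E]
    [MeasurableSpace E] [BorelSpace E] [FiniteDimensional ℝ E] [Nontrivial E]
    (μ : Measure E) [μ.IsAddHaarMeasure] {f : ℝ → ℝ≥0∞} (hf : Measurable f) :
    ∫⁻ x, f ‖x‖ ∂μ = finrank ℝ E * μ (ball 0 1) *
      ∫⁻ r in Ioi (0 : ℝ), ENNReal.ofReal (r ^ (finrank ℝ E - 1)) * f r :=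
  calc ∫⁻ x, f ‖x‖ ∂μ
      = ∫⁻ x : ({(0 : E)}ᶜ : Set E), f ‖(x : E)‖ ∂(μ.comap (↑)) := by
        rw [lintegral_subtype_comap (measurableSet_singleton _).compl (fun y : E => f ‖y‖),
          restrict_compl_singleton]
    _ = ∫⁻ z, f z.2 ∂(μ.toSphere.prod (.volumeIoiPow (finrank ℝ E - 1))) := by
        simpa using (μ.measurePreserving_homeomorphUnitSphereProd).lintegral_comp_emb
          (Homeomorph.measurableEmbedding _) (fun z => f z.2)
    _ = μ.toSphere univ * ∫⁻ r : Ioi (0 : ℝ), f r ∂(.volumeIoiPow (finrank ℝ E - 1)) := by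
        rw [lintegral_prod _ (by fun_prop)]
        simp [lintegral_const, mul_comm]
    _ = _ := by
        rw [Measure.toSphere_apply_univ, Measure.volumeIoiPow,
          lintegral_withDensity_eq_lintegral_mul _ (by fun_prop) (by fun_prop),
          ← lintegral_subtype_comap measurableSet_Ioi
            (fun r : ℝ => ENNReal.ofReal (r ^ (finrank ℝ E - 1)) * f r)]
        rfl

theorem lintegral_comp_sq_Ioi (g : ℝ → ℝ≥0∞) :
    ∫⁻ x in Ioi (0 : ℝ), ENNReal.ofReal (2 * x) * g (x ^ 2) = ∫⁻ y in Ioi (0 : ℝ), g y := by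
  have himage : (· ^ 2) '' Ioi (0 : ℝ) = Ioi 0 := by
    ext y
    refine ⟨?_, fun hy => ⟨√y, sqrt_pos.2 hy, sq_sqrt (le_of_lt hy)⟩⟩
    rintro ⟨x, hx, rfl⟩
    exact pow_pos (mem_Ioi.1 hx) 2
  have hsubst := lintegral_image_eq_lintegral_abs_deriv_mul measurableSet_Ioi
    (fun x _ => (hasDerivAt_pow 2 x).hasDerivWithinAt)
    ((pow_left_strictMonoOn₀ two_ne_zero).injOn.mono Ioi_subset_Ici_self) g
  rw [himage] at hsubst
  rw [hsubst]
  refine setLIntegral_congr_fun measurableSet_Ioi fun x hx => ?_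
  simp [abs_of_pos (mem_Ioi.1 hx)]

theorem lintegral_comp_norm_sq {E : Type*} [NormedAddCommGroup E] [InnerProductSpace ℝ E]
    [FiniteDimensional ℝ E] [MeasurableSpace E] [BorelSpace E] [Nontrivial E]
    {g : ℝ → ℝ≥0∞} (hg : Measurable g) :
    ∫⁻ x : E, g (‖x‖ ^ 2) =
      ENNReal.ofReal (π ^ ((finrank ℝ E : ℝ) / 2) / Gamma ((finrank ℝ E : ℝ) / 2)) *
        ∫⁻ t in Ioi (0 : ℝ), ENNReal.ofReal (t ^ ((finrank ℝ E : ℝ) / 2 - 1)) * g t := by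
  rw [lintegral_fun_norm_addHaar volume (f := fun r => g (r ^ 2)) (by fun_prop),
    InnerProductSpace.volume_ball]
  conv_rhs => rw [← lintegral_comp_sq_Ioi]
  set n := finrank ℝ E
  have hn : 0 < n := finrank_pos
  have hradial (x : ℝ) (hx : 0 < x) :
      ENNReal.ofReal (2 * x) * (ENNReal.ofReal ((x ^ 2) ^ ((n : ℝ) / 2 - 1)) * g (x ^ 2)) =
        2 * (ENNReal.ofReal (x ^ (n - 1)) * g (x ^ 2)) := by
    rw [← mul_assoc, ← ENNReal.ofReal_mul (by positivity), ← mul_assoc, ← ENNReal.ofReal_ofNat,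
      ← ENNReal.ofReal_mul zero_le_two]
    congr 2
    rw [← rpow_natCast, ← rpow_natCast, ← rpow_mul hx.le, Nat.cast_sub hn,
      show (n : ℝ) - (1 : ℕ) = 1 + (2 : ℕ) * ((n : ℝ) / 2 - 1) by push_cast; ring,
      rpow_add hx, rpow_one]
    ring
  have hconst : (n : ℝ≥0∞) * ENNReal.ofReal (√π ^ n / Gamma (n / 2 + 1)) =
      ENNReal.ofReal (π ^ ((n : ℝ) / 2) / Gamma ((n : ℝ) / 2)) * 2 := by
    have hΓ : Gamma ((n : ℝ) / 2 + 1) = (n : ℝ) / 2 * Gamma ((n : ℝ) / 2) :=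
      Gamma_add_one (by positivity)
    have hπ : √π ^ n = π ^ ((n : ℝ) / 2) := by
      rw [sqrt_eq_rpow, ← rpow_natCast, ← rpow_mul pi_pos.le]
      ring_nf
    have hΓ_ne : Gamma ((n : ℝ) / 2) ≠ 0 := (Gamma_pos_of_pos (by positivity)).ne'
    rw [← ENNReal.ofReal_natCast, ← ENNReal.ofReal_ofNat, ← ENNReal.ofReal_mul (by positivity),
      ← ENNReal.ofReal_mul (by positivity), hΓ, hπ]
    congr 1
    field_simp
  rw [setLIntegral_congr_fun measurableSet_Ioi hradial,
    lintegral_const_mul' _ _ ENNReal.ofNat_ne_top, ENNReal.ofReal_one, one_pow, one_mul, hconst,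
    mul_assoc]

theorem lintegral_comp_dotProduct_self {ι : Type*} [Fintype ι] [Nonempty ι]
    {g : ℝ → ℝ≥0∞} (hg : Measurable g) :
    ∫⁻ y : ι → ℝ, g (y ⬝ᵥ y) =
      ENNReal.ofReal (π ^ ((Fintype.card ι : ℝ) / 2) / Gamma ((Fintype.card ι : ℝ) / 2)) *
        ∫⁻ t in Ioi (0 : ℝ), ENNReal.ofReal (t ^ ((Fintype.card ι : ℝ) / 2 - 1)) * g t := by
  rw [← finrank_euclideanSpace (𝕜 := ℝ), ← lintegral_comp_norm_sq hg,
    ← (PiLp.volume_preserving_ofLp ι).lintegral_comp_emb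
      (MeasurableEquiv.toLp 2 (ι → ℝ)).symm.measurableEmbedding]
  congr! 2 with x
  rw [EuclideanSpace.norm_sq_eq]
  simp [dotProduct, sq]

theorem lintegral_comp_mulVec {ι : Type*} [Fintype ι] [DecidableEq ι] {T : Matrix ι ι ℝ}
    (hT : T.det ≠ 0) {G : (ι → ℝ) → ℝ≥0∞} (hG : Measurable G) :
    ∫⁻ x, G x = ENNReal.ofReal |T.det| * ∫⁻ y, G (T *ᵥ y) := by
  have hmap := lintegral_map (μ := volume) hG (toLin' T).continuous_of_finiteDimensional.measurable
  rw [Real.map_matrix_volume_pi_eq_smul_volume_pi hT, lintegral_smul_measure, smul_eq_mul] at hmap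
  simp only [toLin'_apply] at hmap
  rw [← hmap, ← mul_assoc, ← ENNReal.ofReal_mul (abs_nonneg _), ← abs_mul, mul_inv_cancel₀ hT,
    abs_one, ENNReal.ofReal_one, one_mul]

theorem dotProduct_mulVec_inv_mul_transpose {ι : Type*} [Fintype ι] [DecidableEq ι]
    {T : Matrix ι ι ℝ} (hT : IsUnit T.det) (y : ι → ℝ) :
    T *ᵥ y ⬝ᵥ (T * Tᵀ)⁻¹ *ᵥ (T *ᵥ y) = y ⬝ᵥ y := by
  have hTt : IsUnit Tᵀ.det := by rwa [det_transpose]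
  rw [Matrix.mul_inv_rev, mulVec_mulVec, Matrix.mul_assoc, nonsing_inv_mul _ hT, Matrix.mul_one,
    ← vecMul_transpose, ← dotProduct_mulVec, mulVec_mulVec, mul_nonsing_inv _ hTt, one_mulVec]

theorem lintegral_comp_mahalanobis {ι : Type*} [Fintype ι] [DecidableEq ι] {S : Matrix ι ι ℝ}
    (hS : S.PosDef) (μ : ι → ℝ) {g : ℝ → ℝ≥0∞} (hg : Measurable g) :
    ∫⁻ x, g ((x - μ) ⬝ᵥ S⁻¹ *ᵥ (x - μ)) = ENNReal.ofReal √(S.det) * ∫⁻ y : ι → ℝ, g (y ⬝ᵥ y) := by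
  obtain ⟨B, hB⟩ := CStarAlgebra.nonneg_iff_eq_star_mul_self.mp hS.posSemidef.nonneg
  have hST : S = Bᵀ * Bᵀᵀ := by
    rw [hB, transpose_transpose, star_eq_conjTranspose, conjTranspose_eq_transpose_of_trivial]
  have hdet : S.det = Bᵀ.det ^ 2 := by
    rw [hST, det_mul, transpose_transpose, det_transpose, sq]
  have hT : Bᵀ.det ≠ 0 := fun h => hS.det_pos.ne' (by rw [hdet, h, sq, mul_zero])
  have hG : Measurable fun v : ι → ℝ => g (v ⬝ᵥ S⁻¹ *ᵥ v) := by fun_prop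
  calc ∫⁻ x, g ((x - μ) ⬝ᵥ S⁻¹ *ᵥ (x - μ))
      = ∫⁻ v, g (v ⬝ᵥ S⁻¹ *ᵥ v) := lintegral_sub_right_eq_self (fun v => g (v ⬝ᵥ S⁻¹ *ᵥ v)) μ
    _ = ENNReal.ofReal |Bᵀ.det| * ∫⁻ y, g (Bᵀ *ᵥ y ⬝ᵥ S⁻¹ *ᵥ (Bᵀ *ᵥ y)) :=
      lintegral_comp_mulVec hT hG
    _ = _ := by
      simp_rw [hdet, sqrt_sq_eq_abs, hST, dotProduct_mulVec_inv_mul_transpose hT.isUnit]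

theorem map_withDensity_comp_mahalanobis {ι : Type*} [Fintype ι] [DecidableEq ι] [Nonempty ι]
    {S : Matrix ι ι ℝ} (hS : S.PosDef) (μ : ι → ℝ) {f : ℝ → ℝ≥0∞} (hf : Measurable f) :
    (volume.withDensity fun x => f ((x - μ) ⬝ᵥ S⁻¹ *ᵥ (x - μ))).map
        (fun x => (x - μ) ⬝ᵥ S⁻¹ *ᵥ (x - μ)) =
      (volume.restrict (Ioi 0)).withDensity fun t =>
        ENNReal.ofReal (√(S.det) *
          (π ^ ((Fintype.card ι : ℝ) / 2) / Gamma ((Fintype.card ι : ℝ) / 2)) *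
            t ^ ((Fintype.card ι : ℝ) / 2 - 1)) * f t := by
  have hq : Measurable fun x : ι → ℝ => (x - μ) ⬝ᵥ S⁻¹ *ᵥ (x - μ) := by fun_prop
  ext s hs
  have hpre : ∫⁻ x in (fun x => (x - μ) ⬝ᵥ S⁻¹ *ᵥ (x - μ)) ⁻¹' s, f ((x - μ) ⬝ᵥ S⁻¹ *ᵥ (x - μ)) =
      ∫⁻ x, s.indicator f ((x - μ) ⬝ᵥ S⁻¹ *ᵥ (x - μ)) := by
    rw [← lintegral_indicator (hq hs)]
    rfl
  rw [Measure.map_apply hq hs, withDensity_apply _ (hq hs), withDensity_apply _ hs,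
    ← lintegral_indicator hs, hpre, lintegral_comp_mahalanobis hS μ (hf.indicator hs),
    lintegral_comp_dotProduct_self (hf.indicator hs),
    ← lintegral_const_mul' _ _ ENNReal.ofReal_ne_top,
    ← lintegral_const_mul' _ _ ENNReal.ofReal_ne_top]
  refine lintegral_congr fun t => ?_
  rw [indicator_mul_right, ENNReal.ofReal_mul (by positivity),
    ENNReal.ofReal_mul (by positivity)]
  ring

theorem gammaMeasure_eq_withDensity_restrict_Ioi (a r : ℝ) :
    gammaMeasure a r = (volume.restrict (Ioi 0)).withDensity (gammaPDF a r) := by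
  have hIic : gammaMeasure a r (Iic 0) = 0 := by
    rw [gammaMeasure, withDensity_apply _ measurableSet_Iic,
      Measure.restrict_congr_set Iio_ae_eq_Iic.symm, lintegral_gammaPDF_of_nonpos le_rfl]
  rw [← restrict_withDensity measurableSet_Ioi]
  refine (Measure.restrict_eq_self_of_ae_mem (ae_iff.2 ?_)).symm
  simpa only [mem_Ioi, not_lt, ← Iic_def] using hIic

theorem map_mahalanobis_mvGaussian {p : ℕ} (hp : 0 < p) (μ : Fin p → ℝ)
    {S : Matrix (Fin p) (Fin p) ℝ} (hS : S.PosDef) :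
    (mvGaussian μ S).map (fun x => (x - μ) ⬝ᵥ S⁻¹ *ᵥ (x - μ)) =
      gammaMeasure (p / 2 : ℝ) (1 / 2 : ℝ) := by
  have : Nonempty (Fin p) := ⟨⟨0, hp⟩⟩
  have hf : Measurable fun t : ℝ => ENNReal.ofReal
      ((2 * π) ^ (-(p : ℝ) / 2) * S.det ^ (-(1 : ℝ) / 2) * exp (-(1 / 2) * t)) := by fun_prop
  rw [mvGaussian, map_withDensity_comp_mahalanobis hS μ hf,
    gammaMeasure_eq_withDensity_restrict_Ioi]
  refine withDensity_congr_ae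
    ((ae_restrict_iff' measurableSet_Ioi).2 (.of_forall fun t (ht : 0 < t) => ?_))
  have hΓ := Gamma_pos_of_pos (by positivity : (0 : ℝ) < p / 2)
  have h2π : (2 * π) ^ (-(p : ℝ) / 2) = (1 / 2) ^ ((p : ℝ) / 2) / π ^ ((p : ℝ) / 2) := by
    rw [neg_div, rpow_neg (by positivity), mul_rpow zero_le_two pi_pos.le,
      div_rpow zero_le_one zero_le_two, one_rpow]
    field_simp
  have hsqrt : √(S.det) * S.det ^ (-(1 : ℝ) / 2) = 1 := by
    rw [sqrt_eq_rpow, ← rpow_add hS.det_pos]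
    norm_num
  dsimp only
  rw [gammaPDF_of_nonneg ht.le, Fintype.card_fin, ← ENNReal.ofReal_mul (by positivity)]
  congr 1
  calc _ = (√(S.det) * S.det ^ (-(1 : ℝ) / 2)) *
        (π ^ ((p : ℝ) / 2) / Gamma ((p : ℝ) / 2) * ((1 / 2) ^ ((p : ℝ) / 2) / π ^ ((p : ℝ) / 2)))
          * t ^ ((p : ℝ) / 2 - 1) * exp (-(1 / 2) * t) := by rw [h2π]; ring
    _ = _ := by
      rw [hsqrt, neg_mul]
      field_simp

theorem mahalanobis_chiSq_general {p : ℕ} (hp : 0 < p) (μ : Fin p → ℝ)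
    (S : Matrix (Fin p) (Fin p) ℝ) (hPD : S.PosDef)
    {Ω : Type*} [MeasurableSpace Ω] (P : Measure Ω)
    (X : Ω → (Fin p → ℝ)) (hX : Measurable X) (hlaw : P.map X = mvGaussian μ S) :
    P.map (fun ω => (X ω - μ) ⬝ᵥ S⁻¹.mulVec (X ω - μ)) =
      gammaMeasure (p / 2 : ℝ) (1 / 2 : ℝ) := by
  rw [← map_mahalanobis_mvGaussian hp μ hPD, ← hlaw, Measure.map_map (by fun_prop) hX]
  rfl

/-- **Proposition 1.** If `X ~ N(μ, Σ)` with `Σ` symmetric positive definite, then the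
Mahalanobis distance statistic `d = (X − μ)ᵀ Σ⁻¹ (X − μ)` is chi-squared distributed with
`p` degrees of freedom, i.e. Gamma with shape `p/2` and rate `1/2`. -/
theorem mahalanobis_chiSq {p : ℕ} (hp : 0 < p) (μ : Fin p → ℝ)
    (S : Matrix (Fin p) (Fin p) ℝ) (hSymm : S.IsSymm) (hPD : S.PosDef)
    {Ω : Type*} [MeasurableSpace Ω] (P : Measure Ω) [IsProbabilityMeasure P]
    (X : Ω → (Fin p → ℝ)) (hX : Measurable X) (hlaw : P.map X = mvGaussian μ S) :
    P.map (fun ω => (X ω - μ) ⬝ᵥ S⁻¹.mulVec (X ω - μ)) =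
      gammaMeasure (p / 2 : ℝ) (1 / 2 : ℝ) :=
  mahalanobis_chiSq_general hp μ S hPD P X hX hlaw
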